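/- Fix q ∈ ℝ, ω_k > 0, ω > 0 and z₀ ∈ ℂ, and let k := p(ω_k, z₀). Then for every z ≠ z₀, (q·ω/(4π)) · η(k, ε̄(z)) / η(k, p(ω,z)) = (q/(4π√2)) · (1 + z₀·conj z)/(z − z₀). (This is the paper's identity (4.20) expressing the electromagnetic memory Green's function in the Weinberg soft-photon form q ω k^μ ε̄_μ / (k · p); in particular the left-hand side is independent of ω and of ω_k.) -/

import Mathlib

noncomputable section

def eta (u v : Fin 4 → ℂ) : ℂ := -(u 0 * v 0) + u 1 * v 1 + u 2 * v 2 + u 3 * v 3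

def pmom (ω : ℝ) (z : ℂ) : Fin 4 → ℂ := fun i =>
  (ω : ℂ) * ![1,
    (z + (starRingEnd ℂ) z) / (1 + ((‖z‖ : ℝ) : ℂ) ^ 2),
    -Complex.I * (z - (starRingEnd ℂ) z) / (1 + ((‖z‖ : ℝ) : ℂ) ^ 2),
    (1 - ((‖z‖ : ℝ) : ℂ) ^ 2) / (1 + ((‖z‖ : ℝ) : ℂ) ^ 2)] i

def Pconf (z : ℂ) : ℝ := (1 + ‖z‖ ^ 2) / Real.sqrt 2

def epsPol (z : ℂ) : Fin 4 → ℂ := fun i =>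
  (1 / (2 * ((Pconf z : ℝ) : ℂ))) * ![0, 1 - z ^ 2, Complex.I * (1 + z ^ 2), -2 * z] i

def epsBarPol (z : ℂ) : Fin 4 → ℂ := fun i =>
  (1 / (2 * ((Pconf z : ℝ) : ℂ))) *
    ![0, 1 - ((starRingEnd ℂ) z) ^ 2, -Complex.I * (1 + ((starRingEnd ℂ) z) ^ 2),
      -2 * (starRingEnd ℂ) z] i

/-! Over the common denominator `(1 + |z₀|²)(1 + |z|²)`, the products `η(k, p(ω,z))` and
`η(k, ε̄(z))` share the factors `ω_k` and `z̄ - z̄₀`, which cancel in the quotient; the remaining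
`ω` cancels against the prefactor. -/

open ComplexConjugate

lemma one_add_mul_conj_ne_zero (z : ℂ) : 1 + z * conj z ≠ 0 := by
  rw [Complex.mul_conj']
  exact_mod_cast (by positivity : (1 + ‖z‖ ^ 2 : ℝ) ≠ 0)

lemma eta_pmom_pmom (ω' ω : ℝ) (z' z : ℂ) :
    eta (pmom ω' z') (pmom ω z) =
      -2 * ω' * ω * (z - z') * (conj z - conj z') / ((1 + z' * conj z') * (1 + z * conj z)) := by
  have := one_add_mul_conj_ne_zero z'
  have := one_add_mul_conj_ne_zero z
  simp only [eta, pmom, Matrix.cons_val, ← Complex.mul_conj']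
  field_simp
  ring_nf
  simp only [Complex.I_sq]
  ring

lemma eta_pmom_epsBarPol (ω' : ℝ) (z' z : ℂ) :
    eta (pmom ω' z') (epsBarPol z) =
      √2 * ω' * (conj z' - conj z) * (1 + z' * conj z) / ((1 + z' * conj z') * (1 + z * conj z)) := by
  have := one_add_mul_conj_ne_zero z'
  have := one_add_mul_conj_ne_zero z
  simp only [eta, pmom, epsBarPol, Pconf, Matrix.cons_val, Complex.ofReal_div, Complex.ofReal_add,
    Complex.ofReal_one, Complex.ofReal_pow, ← Complex.mul_conj']
  have : (√2 : ℂ) ≠ 0 := by exact_mod_cast (by positivity : √2 ≠ 0)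
  field_simp
  ring_nf
  simp only [Complex.I_sq]
  ring

/-- The paper's identity (4.20): the electromagnetic memory Green's function in
Weinberg soft-photon form. For `q ∈ ℝ`, `ω_k > 0`, `ω > 0`, `k := p(ω_k,z₀)`
and every `z ≠ z₀`,
`(qω/4π) η(k, ε̄(z))/η(k, p(ω,z)) = (q/(4π√2)) (1 + z₀z̄)/(z − z₀)`;
in particular the left-hand side is independent of `ω` and `ω_k`. -/
theorem memH_eq_weinberg_soft_photon_factor
    (q : ℝ) (ωk ω : ℝ) (hωk : 0 < ωk) (hω : 0 < ω) (z₀ : ℂ) (z : ℂ) (hz : z ≠ z₀) :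
    ((q * ω / (4 * Real.pi) : ℝ) : ℂ) *
        eta (pmom ωk z₀) (epsBarPol z) / eta (pmom ωk z₀) (pmom ω z)
      = ((q / (4 * Real.pi * Real.sqrt 2) : ℝ) : ℂ) *
          (1 + z₀ * (starRingEnd ℂ) z) / (z - z₀) := by
  have hD := mul_ne_zero (one_add_mul_conj_ne_zero z₀) (one_add_mul_conj_ne_zero z)
  have : z - z₀ ≠ 0 := sub_ne_zero.mpr hz
  have : conj z - conj z₀ ≠ 0 := sub_ne_zero.mpr ((RingHom.injective _).ne hz)
  have : (ωk : ℂ) ≠ 0 := by exact_mod_cast hωk.ne'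
  have : (ω : ℂ) ≠ 0 := by exact_mod_cast hω.ne'
  have : (Real.pi : ℂ) ≠ 0 := by exact_mod_cast Real.pi_ne_zero
  have : (√2 : ℂ) ≠ 0 := by exact_mod_cast (by positivity : √2 ≠ 0)
  have hsqrt : (√2 : ℂ) ^ 2 = 2 := by exact_mod_cast Real.sq_sqrt zero_le_two
  rw [eta_pmom_epsBarPol, eta_pmom_pmom, mul_div_assoc, div_div_div_cancel_right₀ hD]
  push_cast
  field_simp
  linear_combination q * (conj z - conj z₀) * (1 + z₀ * conj z) * hsqrt

end
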